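/- arXiv:1402.6001 — 3 statements merged into one kernel-verified Lean document; each statement's English description precedes it below -/
import Mathlib

section
/- Let d ≥ 2 be an integer, let S be a real d×d symmetric positive definite matrix, and let C > 0 be a constant such that (1/d)·tr(S) ≤ C·det(S)^{1/d}. Then (1/d)·tr(S⁻¹) ≤ (d·C/(d−1))^{d−1} · det(S)^{−1/d}. -/
open Matrix Finset

theorem stmt_3 (d : ℕ) (hd : 2 ≤ d)
    (S : Matrix (Fin d) (Fin d) ℝ) (hS : S.PosDef)
    (C : ℝ) (hC : 0 < C)
    (h : (1 / (d : ℝ)) * S.trace ≤ C * S.det ^ ((1 : ℝ) / d)) :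
    (1 / (d : ℝ)) * (S⁻¹).trace ≤
      ((d : ℝ) * C / ((d : ℝ) - 1)) ^ (d - 1) * S.det ^ (-(1 : ℝ) / d) := by
  classical
  set ev := hS.1.eigenvalues with hev
  set U := (hS.1.eigenvectorUnitary : Matrix (Fin d) (Fin d) ℝ) with hUdef
  have hUU : star U * U = 1 := by
    rw [hUdef]; exact Matrix.mem_unitaryGroup_iff'.mp hS.1.eigenvectorUnitary.2
  have hUU' : U * star U = 1 := by
    rw [hUdef]; exact Matrix.mem_unitaryGroup_iff.mp hS.1.eigenvectorUnitary.2
  have hpos : ∀ i, 0 < ev i := hS.eigenvalues_pos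
  have hspec : S = U * diagonal ev * star U := by
    have := hS.1.spectral_theorem
    simpa [RCLike.ofReal_real_eq_id] using this
  have htr : S.trace = ∑ i, ev i := by
    rw [hspec, Matrix.trace_mul_cycle, hUU, one_mul, trace_diagonal]
  have hinv : S⁻¹ = U * diagonal (fun i => (ev i)⁻¹) * star U := by
    apply inv_eq_right_inv
    rw [hspec]
    calc U * diagonal ev * star U * (U * diagonal (fun i => (ev i)⁻¹) * star U)
        = U * diagonal ev * (star U * U) * (diagonal (fun i => (ev i)⁻¹) * star U) := by
          simp only [mul_assoc]
      _ = 1 := by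
          rw [hUU, mul_one, ← mul_assoc, mul_assoc U, diagonal_mul_diagonal]
          simp [fun i => (hpos i).ne', hUU']
  have htrinv : (S⁻¹).trace = ∑ i, (ev i)⁻¹ := by
    rw [hinv, Matrix.trace_mul_cycle, hUU, one_mul, trace_diagonal]
  have hdet : S.det = ∏ i, ev i := by
    simpa [RCLike.ofReal_real_eq_id] using hS.1.det_eq_prod_eigenvalues
  -- scalar setup
  set m := d - 1 with hm
  have hm1 : 1 ≤ m := by omega
  have hmd : (m : ℝ) = (d : ℝ) - 1 := by
    have : (m : ℕ) + 1 = d := by omega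
    push_cast [← this]; ring
  have hmpos : (0:ℝ) < m := by positivity
  have hdpos : (0:ℝ) < d := by positivity
  set T := ∑ i, ev i with hT
  set P := ∏ i, ev i with hP
  have hPpos : 0 < P := Finset.prod_pos fun i _ => hpos i
  have hTpos : 0 < T := Finset.sum_pos (fun i _ => hpos i) ⟨⟨0, by omega⟩, mem_univ _⟩
  -- AM-GM per index
  have key : ∀ i : Fin d, ∏ j ∈ univ.erase i, ev j ≤ (T / m) ^ m := by
    intro i
    have hcard : ((univ.erase i).card : ℝ) = (m : ℝ) := by
      rw [Finset.card_erase_of_mem (mem_univ i), Finset.card_univ, Fintype.card_fin]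
    have hamgm := Real.geom_mean_le_arith_mean (univ.erase i) (fun _ => (1:ℝ)) ev
      (fun _ _ => zero_le_one)
      (by rw [Finset.sum_const, nsmul_eq_mul, mul_one, hcard]; exact hmpos)
      (fun j _ => (hpos j).le)
    simp only [Real.rpow_one, one_mul, Finset.sum_const, nsmul_eq_mul, mul_one] at hamgm
    rw [hcard] at hamgm
    set Q := ∏ j ∈ univ.erase i, ev j with hQ
    have hQpos : 0 < Q := Finset.prod_pos fun j _ => hpos j
    have hsub : ∑ j ∈ univ.erase i, ev j ≤ T := by
      apply Finset.sum_le_sum_of_subset_of_nonneg (Finset.subset_univ _)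
      exact fun j _ _ => (hpos j).le
    have h1 : Q ^ ((m:ℝ)⁻¹) ≤ T / m := hamgm.trans (by gcongr)
    have h2 : Q = (Q ^ ((m:ℝ)⁻¹)) ^ (m:ℕ) := by
      rw [← Real.rpow_natCast (Q ^ ((m:ℝ)⁻¹)) m, ← Real.rpow_mul hQpos.le,
        inv_mul_cancel₀ (by positivity), Real.rpow_one]
    rw [h2]
    exact pow_le_pow_left₀ (Real.rpow_nonneg hQpos.le _) h1 m
  -- sum of inverses bound
  have hsum : ∑ i, (ev i)⁻¹ ≤ (d : ℝ) * ((T / m) ^ m / P) := by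
    have hinv_eq : ∀ i : Fin d, (ev i)⁻¹ = (∏ j ∈ univ.erase i, ev j) / P := by
      intro i
      have hme := Finset.mul_prod_erase univ ev (mem_univ i)
      rw [← hP] at hme
      have hQpos : 0 < ∏ j ∈ univ.erase i, ev j := Finset.prod_pos fun j _ => hpos j
      rw [← hme]
      field_simp [(hpos i).ne', hQpos.ne']
    calc ∑ i, (ev i)⁻¹ = ∑ i : Fin d, (∏ j ∈ univ.erase i, ev j) / P :=
          Finset.sum_congr rfl fun i _ => hinv_eq i
      _ ≤ ∑ _i : Fin d, (T / m) ^ m / P := by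
          apply Finset.sum_le_sum
          intro i _
          gcongr
          exact key i
      _ = (d : ℝ) * ((T / m) ^ m / P) := by
          simp [Finset.sum_const, Fintype.card_fin]
  -- combine
  have hTle : T ≤ (d : ℝ) * C * P ^ ((1:ℝ)/d) := by
    rw [htr, hdet] at h
    calc T = (d:ℝ) * ((1/(d:ℝ)) * T) := by field_simp
      _ ≤ (d:ℝ) * (C * P ^ ((1:ℝ)/d)) := mul_le_mul_of_nonneg_left h hdpos.le
      _ = (d : ℝ) * C * P ^ ((1:ℝ)/d) := by ring
  have hpow : (T / m) ^ m ≤ ((d:ℝ) * C / m) ^ m * (P ^ ((1:ℝ)/d)) ^ (m:ℕ) := by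
    rw [← mul_pow]
    apply pow_le_pow_left₀ (div_nonneg hTpos.le hmpos.le)
    rw [div_mul_eq_mul_div]
    gcongr
  have hrpow : (P ^ ((1:ℝ)/d)) ^ (m:ℕ) / P = P ^ (-(1:ℝ)/d) := by
    have e1 : (P ^ ((1:ℝ)/d)) ^ (m:ℕ) = P ^ ((m:ℝ)/d) := by
      rw [← Real.rpow_natCast (P ^ ((1:ℝ)/d)) m, ← Real.rpow_mul hPpos.le]
      congr 1; ring
    have e2 : P ^ (-(1:ℝ)/d) * P = P ^ ((m:ℝ)/d) := by
      rw [← Real.rpow_add_one hPpos.ne']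
      congr 1
      rw [hmd]
      field_simp
      ring
    rw [e1, div_eq_iff hPpos.ne', ← e2]
  rw [htrinv, hdet, ← hmd]
  calc (1/(d:ℝ)) * ∑ i, (ev i)⁻¹
      ≤ (1/(d:ℝ)) * ((d : ℝ) * ((T / m) ^ m / P)) := by
        gcongr
    _ = (T / m) ^ m / P := by field_simp
    _ ≤ (((d:ℝ) * C / m) ^ m * (P ^ ((1:ℝ)/d)) ^ (m:ℕ)) / P := by gcongr
    _ = ((d:ℝ) * C / m) ^ m * ((P ^ ((1:ℝ)/d)) ^ (m:ℕ) / P) := by ring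
    _ = ((d:ℝ) * C / m) ^ m * P ^ (-(1:ℝ)/d) := by rw [hrpow]
end

section
/- Let V be a real inner product space, let S be a subspace of V, and let v ∈ V and p ∈ S be such that ⟨v − p, w⟩ = 0 for all w ∈ S (i.e., p is the orthogonal projection of v onto S). Let u₁, …, u_k ∈ V and s₁, …, s_k ∈ S, and let β₁, …, β_k ∈ ℝ satisfy β₁² + ⋯ + β_k² = 1. If v = β₁ u₁ + ⋯ + β_k u_k, then ‖v − p‖² ≤ Σ_{j=1}^{k} ‖u_j − s_j‖². -/
/-! The vector `q = ∑ βⱼ sⱼ` lies in `S` and `v - q = ∑ βⱼ (uⱼ - sⱼ)`. Since `p` is the best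
approximation of `v` in `S`, `‖v - p‖² ≤ ‖v - q‖²`, and by the triangle and Cauchy–Schwarz
inequalities `‖v - q‖² ≤ (∑ βⱼ²) ∑ ‖uⱼ - sⱼ‖² = ∑ ‖uⱼ - sⱼ‖²`. -/

open Finset

theorem norm_sub_sq_le_of_inner_sub_eq_zero {V : Type*} [NormedAddCommGroup V]
    [InnerProductSpace ℝ V] {S : Submodule ℝ V} {v p q : V} (hp : p ∈ S)
    (hproj : ∀ w ∈ S, inner ℝ (v - p) w = (0 : ℝ)) (hq : q ∈ S) :
    ‖v - p‖ ^ 2 ≤ ‖v - q‖ ^ 2 := by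
  have hpyth : ‖v - q‖ ^ 2 = ‖v - p‖ ^ 2 + ‖p - q‖ ^ 2 := by
    rw [← sub_add_sub_cancel v p q, sq, sq, sq,
      norm_add_sq_eq_norm_sq_add_norm_sq_real (hproj _ (S.sub_mem hp hq))]
  rw [hpyth]
  exact le_add_of_nonneg_right (sq_nonneg _)

theorem norm_sum_smul_sq_le {ι E : Type*} [SeminormedAddCommGroup E] [NormedSpace ℝ E]
    (t : Finset ι) (β : ι → ℝ) (x : ι → E) :
    ‖∑ j ∈ t, β j • x j‖ ^ 2 ≤ (∑ j ∈ t, β j ^ 2) * ∑ j ∈ t, ‖x j‖ ^ 2 := by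
  have htri : ‖∑ j ∈ t, β j • x j‖ ≤ ∑ j ∈ t, |β j| * ‖x j‖ :=
    (norm_sum_le _ _).trans_eq (by simp only [norm_smul, Real.norm_eq_abs])
  calc ‖∑ j ∈ t, β j • x j‖ ^ 2 ≤ (∑ j ∈ t, |β j| * ‖x j‖) ^ 2 :=
        pow_le_pow_left₀ (norm_nonneg _) htri 2
    _ ≤ (∑ j ∈ t, |β j| ^ 2) * ∑ j ∈ t, ‖x j‖ ^ 2 := sum_mul_sq_le_sq_mul_sq _ _ _
    _ = (∑ j ∈ t, β j ^ 2) * ∑ j ∈ t, ‖x j‖ ^ 2 := by simp only [sq_abs]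

theorem stmt_4 {V : Type*} [NormedAddCommGroup V] [InnerProductSpace ℝ V]
    (S : Submodule ℝ V) (v p : V) (hp : p ∈ S)
    (hproj : ∀ w ∈ S, inner ℝ (v - p) w = (0 : ℝ))
    (k : ℕ) (u : Fin k → V) (s : Fin k → V) (hs : ∀ j, s j ∈ S)
    (β : Fin k → ℝ) (hβ : ∑ j, β j ^ 2 = 1)
    (hv : v = ∑ j, β j • u j) :
    ‖v - p‖ ^ 2 ≤ ∑ j, ‖u j - s j‖ ^ 2 := by
  have hq : ∑ j, β j • s j ∈ S := S.sum_mem fun j _ => S.smul_mem _ (hs j)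
  have hvq : v - ∑ j, β j • s j = ∑ j, β j • (u j - s j) := by
    simp only [hv, smul_sub, sum_sub_distrib]
  calc ‖v - p‖ ^ 2 ≤ ‖v - ∑ j, β j • s j‖ ^ 2 :=
        norm_sub_sq_le_of_inner_sub_eq_zero hp hproj hq
    _ ≤ (∑ j, β j ^ 2) * ∑ j, ‖u j - s j‖ ^ 2 := hvq ▸ norm_sum_smul_sq_le _ _ _
    _ = ∑ j, ‖u j - s j‖ ^ 2 := by rw [hβ, one_mul]
end

section
/- Let d be a positive integer, let M be a real d×d symmetric positive definite matrix, let H be a real d×d symmetric positive semidefinite matrix, and let F be any real d×d matrix. Then ‖Fᵀ H F‖₂ ≤ ‖Fᵀ M F‖₂ · ‖M⁻¹ H‖₂, where ‖·‖₂ denotes the spectral norm (operator norm induced by the Euclidean vector norm). -/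
open Matrix

/-- The spectral norm of a real `d × d` matrix: the operator norm of the
induced linear map on Euclidean space. -/
noncomputable def specNorm {d : ℕ} (A : Matrix (Fin d) (Fin d) ℝ) : ℝ :=
  ‖(Matrix.toEuclideanCLM (𝕜 := ℝ) (n := Fin d) A :
      EuclideanSpace ℝ (Fin d) →L[ℝ] EuclideanSpace ℝ (Fin d))‖

/-!
Write `M = Sᵀ S` with `S` invertible and put `N = S⁻ᵀ H S⁻¹`. Then `Fᵀ H F = (S F)ᵀ N (S F)`, so the
C⋆-identity gives `‖Fᵀ H F‖ ≤ ‖N‖ ‖Fᵀ M F‖`. The matrix `N` is symmetric and similar to `M⁻¹ H`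
(`N S = S (M⁻¹ H)`). A symmetric matrix has norm equal to its spectral radius, which is at most the
norm of any matrix similar to it: `‖N‖ ^ 2 ^ k = ‖N ^ 2 ^ k‖ ≤ ‖S‖ ‖S⁻¹‖ ‖M⁻¹ H‖ ^ 2 ^ k` for all `k`.
-/

open Filter Topology

lemma le_of_forall_pow_two_pow_le_mul {a b C : ℝ} (hb : 0 ≤ b)
    (h : ∀ k : ℕ, a ^ 2 ^ k ≤ C * b ^ 2 ^ k) : a ≤ b := by
  by_contra! hba
  have ha : 0 < a := hb.trans_lt hba
  have hlim : Tendsto (fun k : ℕ => C * (b / a) ^ 2 ^ k) atTop (𝓝 0) := by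
    simpa using ((tendsto_pow_atTop_nhds_zero_of_lt_one (div_nonneg hb ha.le)
      ((div_lt_one ha).mpr hba)).comp (tendsto_pow_atTop_atTop_of_one_lt one_lt_two)).const_mul C
  have hone : ∀ k : ℕ, 1 ≤ C * (b / a) ^ 2 ^ k := fun k => by
    rw [div_pow, ← mul_div_assoc, le_div_iff₀ (by positivity), one_mul]
    exact h k
  exact absurd (ge_of_tendsto' hlim hone) (by norm_num)

section CStarRing

variable {R : Type*} [NormedRing R] [StarRing R] [CStarRing R]

lemma IsSelfAdjoint.norm_le_of_semiconjBy {a b : R} (ha : IsSelfAdjoint a) (u : Rˣ)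
    (hab : SemiconjBy (↑u) b a) : ‖a‖ ≤ ‖b‖ := by
  refine le_of_forall_pow_two_pow_le_mul (norm_nonneg b) (C := ‖(u : R)‖ * ‖(↑u⁻¹ : R)‖) fun k => ?_
  have hconj : a ^ 2 ^ k = u * b ^ 2 ^ k * ↑u⁻¹ :=
    (Units.eq_mul_inv_iff_mul_eq u).mpr (hab.pow_right (2 ^ k)).symm
  calc ‖a‖ ^ 2 ^ k = ‖a ^ 2 ^ k‖ := (ha.norm_pow_two_pow k).symm
    _ ≤ ‖(u : R)‖ * ‖b ^ 2 ^ k‖ * ‖(↑u⁻¹ : R)‖ := hconj ▸ norm_mul₃_le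
    _ ≤ ‖(u : R)‖ * ‖b‖ ^ 2 ^ k * ‖(↑u⁻¹ : R)‖ := by
      gcongr; exact norm_pow_le' b (Nat.two_pow_pos k)
    _ = ‖(u : R)‖ * ‖(↑u⁻¹ : R)‖ * ‖b‖ ^ 2 ^ k := by ring

lemma norm_star_mul_mul_le (x n : R) : ‖star x * n * x‖ ≤ ‖n‖ * ‖star x * x‖ := by
  calc ‖star x * n * x‖ ≤ ‖star x‖ * ‖n‖ * ‖x‖ := norm_mul₃_le
    _ = ‖n‖ * ‖star x * x‖ := by rw [CStarRing.norm_star_mul_self, norm_star]; ring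

theorem norm_star_mul_mul_le_mul_norm_inv_mul (s : Rˣ) {h : R} (hh : IsSelfAdjoint h) (f : R) :
    ‖star f * h * f‖ ≤ ‖star f * ↑(star s * s) * f‖ * ‖↑(star s * s)⁻¹ * h‖ := by
  set n := star ↑s⁻¹ * h * ↑s⁻¹ with hn
  have hfhf : star f * h * f = star (↑s * f) * n * (↑s * f) := by
    have hs : star (s : R) * star ↑s⁻¹ = 1 := by rw [← star_mul, Units.inv_mul, star_one]
    calc star f * h * f = star f * (star (s : R) * star ↑s⁻¹) * h * (↑s⁻¹ * ↑s) * f := by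
          rw [hs, Units.inv_mul, mul_one, mul_one]
      _ = star (↑s * f) * n * (↑s * f) := by simp only [hn, star_mul, mul_assoc]
  have hsn : SemiconjBy (↑s) (↑(star s * s)⁻¹ * h) n := by
    simp only [SemiconjBy, hn, _root_.mul_inv_rev, Units.val_mul, Units.coe_star_inv, mul_assoc,
      Units.mul_inv_cancel_left, Units.inv_mul, mul_one]
  calc ‖star f * h * f‖ = ‖star (↑s * f) * n * (↑s * f)‖ := by rw [hfhf]
    _ ≤ ‖n‖ * ‖star (↑s * f) * (↑s * f)‖ := norm_star_mul_mul_le _ _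
    _ ≤ ‖↑(star s * s)⁻¹ * h‖ * ‖star (↑s * f) * (↑s * f)‖ := by
      gcongr; exact (hh.conjugate' _).norm_le_of_semiconjBy s hsn
    _ = ‖star f * ↑(star s * s) * f‖ * ‖↑(star s * s)⁻¹ * h‖ := by
      rw [mul_comm]; simp only [star_mul, Units.val_mul, Units.coe_star, mul_assoc]

end CStarRing

open scoped Matrix.Norms.L2Operator MatrixOrder ComplexOrder

lemma specNorm_eq_norm {d : ℕ} (A : Matrix (Fin d) (Fin d) ℝ) : specNorm A = ‖A‖ := rfl

lemma Matrix.PosDef.exists_units_eq_star_mul_self {n 𝕜 : Type*} [Fintype n] [DecidableEq n]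
    [RCLike 𝕜] {M : Matrix n n 𝕜} (hM : M.PosDef) : ∃ s : (Matrix n n 𝕜)ˣ, M = ↑(star s * s) := by
  obtain ⟨B, rfl⟩ := CStarAlgebra.nonneg_iff_eq_star_mul_self.mp hM.posSemidef.nonneg
  exact ⟨(isUnit_of_mul_isUnit_right hM.isUnit).unit,
    by rw [Units.val_mul, Units.coe_star, IsUnit.unit_spec]⟩

theorem stmt_5_general (d : ℕ)
    (M H F : Matrix (Fin d) (Fin d) ℝ)
    (hM : M.PosDef) (hH : H.PosSemidef) :
    specNorm (Fᵀ * H * F) ≤ specNorm (Fᵀ * M * F) * specNorm (M⁻¹ * H) := by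
  obtain ⟨s, rfl⟩ := hM.exists_units_eq_star_mul_self
  rw [← coe_units_inv, ← F.conjTranspose_eq_transpose_of_trivial, ← star_eq_conjTranspose]
  simp only [specNorm_eq_norm]
  exact norm_star_mul_mul_le_mul_norm_inv_mul s hH.isHermitian F

theorem stmt_5 (d : ℕ) (hd : 0 < d)
    (M H F : Matrix (Fin d) (Fin d) ℝ)
    (hM : M.PosDef) (hH : H.PosSemidef) :
    specNorm (Fᵀ * H * F) ≤ specNorm (Fᵀ * M * F) * specNorm (M⁻¹ * H) :=
  stmt_5_general d M H F hM hH
end
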